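/- arXiv:2601.03143 — 3 statements merged into one kernel-verified Lean document; each statement's English description precedes it below -/
import Mathlib

section
/- Let μ₀ > 0 be a real constant. Define for μ_i, μ_j ∈ ℝ³ and r ∈ ℝ³ with r ≠ 0 the dipole force f(μ_i, μ_j, r) = (3μ₀/(4π))·[ (μ_i·μ_j)/‖r‖⁵ · r + (μ_i·r)/‖r‖⁵ · μ_j + (μ_j·r)/‖r‖⁵ · μ_i − 5(μ_i·r)(μ_j·r)/‖r‖⁷ · r ] and the dipole torque τ(μ_i, μ_j, r) = (μ₀/(4π))· μ_j × ( 3r(μ_i·r)/‖r‖⁵ − μ_i/‖r‖³ ). Then the total torque of the two-dipole interaction about the position of dipole i vanishes: τ(μ_i, μ_j, r) + τ(μ_j, μ_i, −r) + r × f(μ_i, μ_j, r) = 0 for all μ_i, μ_j ∈ ℝ³ and all r ≠ 0. -/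
noncomputable section

/-- Euclidean inner product on ℝ³. -/
def dot3 (u v : Fin 3 → ℝ) : ℝ := ∑ i, u i * v i

/-- Euclidean norm on ℝ³. -/
def norm3 (u : Fin 3 → ℝ) : ℝ := Real.sqrt (dot3 u u)

/-- Cross product on ℝ³. -/
def cross3 (u v : Fin 3 → ℝ) : Fin 3 → ℝ :=
  ![u 1 * v 2 - u 2 * v 1, u 2 * v 0 - u 0 * v 2, u 0 * v 1 - u 1 * v 0]

/-- The magnetic dipole interaction force exerted on dipole `μj` by dipole `μi`,
where `r` is the position of dipole j relative to dipole i. -/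
def dipoleForce (μ₀ : ℝ) (μi μj r : Fin 3 → ℝ) : Fin 3 → ℝ :=
  (3 * μ₀ / (4 * Real.pi)) •
    ((dot3 μi μj / norm3 r ^ 5) • r + (dot3 μi r / norm3 r ^ 5) • μj +
      (dot3 μj r / norm3 r ^ 5) • μi -
      (5 * dot3 μi r * dot3 μj r / norm3 r ^ 7) • r)

/-- The magnetic dipole interaction torque exerted on dipole `μj` by dipole `μi`,
where `r` is the position of dipole j relative to dipole i. -/
def dipoleTorque (μ₀ : ℝ) (μi μj r : Fin 3 → ℝ) : Fin 3 → ℝ :=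
  (μ₀ / (4 * Real.pi)) •
    cross3 μj ((3 * dot3 μi r / norm3 r ^ 5) • r - (1 / norm3 r ^ 3) • μi)

/-!
Both torques split into a part `μ × (3 (μ' · r) / ‖r‖⁵) r` and a part `μ × μ' / ‖r‖³`. The latter
cancel between the two torques by antisymmetry of the cross product, and the former add up to
`-(r × f)`: the `r`-components of the force drop out of `r × f` because `r × r = 0`.
-/

open Matrix

theorem cross3_eq_crossProduct (u v : Fin 3 → ℝ) : cross3 u v = u ⨯₃ v := rfl

theorem dot3_eq_dotProduct (u v : Fin 3 → ℝ) : dot3 u v = u ⬝ᵥ v := rfl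

theorem norm3_neg (u : Fin 3 → ℝ) : norm3 (-u) = norm3 u := by
  simp only [norm3, dot3_eq_dotProduct, neg_dotProduct, dotProduct_neg, neg_neg]

theorem dipoleTorque_add_dipoleTorque_neg (μ₀ : ℝ) (μi μj r : Fin 3 → ℝ) :
    dipoleTorque μ₀ μi μj r + dipoleTorque μ₀ μj μi (-r) =
      (3 * μ₀ / (4 * Real.pi) / norm3 r ^ 5) • (dot3 μi r • μj ⨯₃ r + dot3 μj r • μi ⨯₃ r) := by
  simp only [dipoleTorque, cross3_eq_crossProduct, norm3_neg, dot3_eq_dotProduct,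
    dotProduct_neg, map_sub, map_smul, map_neg, ← cross_anticomm μi μj]
  module

theorem cross_dipoleForce (μ₀ : ℝ) (μi μj r : Fin 3 → ℝ) :
    cross3 r (dipoleForce μ₀ μi μj r) =
      -((3 * μ₀ / (4 * Real.pi) / norm3 r ^ 5) • (dot3 μi r • μj ⨯₃ r + dot3 μj r • μi ⨯₃ r)) := by
  simp only [dipoleForce, cross3_eq_crossProduct, map_add, map_sub, map_smul, cross_self,
    ← cross_anticomm r μi, ← cross_anticomm r μj]
  module

theorem dipole_total_torque_vanishes_general (μ₀ : ℝ) :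
    ∀ (μi μj r : Fin 3 → ℝ), r ≠ 0 →
      dipoleTorque μ₀ μi μj r + dipoleTorque μ₀ μj μi (-r) +
        cross3 r (dipoleForce μ₀ μi μj r) = 0 := by
  intro μi μj r _
  rw [dipoleTorque_add_dipoleTorque_neg, cross_dipoleForce, add_neg_cancel]

/-- the total torque of the two-dipole interaction about the position
of dipole i vanishes. -/
theorem dipole_total_torque_vanishes (μ₀ : ℝ) (hμ₀ : 0 < μ₀) :
    ∀ (μi μj r : Fin 3 → ℝ), r ≠ 0 →
      dipoleTorque μ₀ μi μj r + dipoleTorque μ₀ μj μi (-r) +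
        cross3 r (dipoleForce μ₀ μi μj r) = 0 :=
  dipole_total_torque_vanishes_general μ₀
end
end

section
/- Let μ₀ > 0 be a real constant, let r ∈ ℝ³ with r ≠ 0, let ω > 0, and let μ_iˢ, μ_iᶜ, μ_jˢ, μ_jᶜ ∈ ℝ³. Define the time-varying dipole moments μ_i(t) = μ_iˢ·sin(ωt) + μ_iᶜ·cos(ωt) and μ_j(t) = μ_jˢ·sin(ωt) + μ_jᶜ·cos(ωt), and the dipole force f(μ_i, μ_j, r) = (3μ₀/(4π))·[ (μ_i·μ_j)/‖r‖⁵ · r + (μ_i·r)/‖r‖⁵ · μ_j + (μ_j·r)/‖r‖⁵ · μ_i − 5(μ_i·r)(μ_j·r)/‖r‖⁷ · r ]. Then the first-order average of the force over one period T = 2π/ω equals (1/T)·∫₀ᵀ f(μ_i(t), μ_j(t), r) dt = (1/2)·( f(μ_iˢ, μ_jˢ, r) + f(μ_iᶜ, μ_jᶜ, r) ). -/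
noncomputable section

/-! `dipoleForce μ₀ · · r` is bilinear, so along the moments `sin (ω t) • s + cos (ω t) • c` the
force is a quadratic form in `(sin (ω t), cos (ω t))`. Over a full period `sin²` and `cos²`
average to `1/2` and `sin · cos` to `0`, which leaves half the sine–sine plus cosine–cosine force. -/

open Real

theorem dipoleForce_smul_add_smul (μ₀ s c : ℝ) (a b a' b' r : Fin 3 → ℝ) :
    dipoleForce μ₀ (s • a + c • b) (s • a' + c • b') r =
      (s * s) • dipoleForce μ₀ a a' r + (s * c) • (dipoleForce μ₀ a b' r + dipoleForce μ₀ b a' r) +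
        (c * c) • dipoleForce μ₀ b b' r := by
  funext k
  simp only [dipoleForce, dot3, Fin.sum_univ_three, Pi.add_apply, Pi.smul_apply, Pi.sub_apply,
    smul_eq_mul]
  ring

theorem integral_sin_mul_sin_zero_two_pi : ∫ x in (0 : ℝ)..2 * π, sin x * sin x = π := by
  simp [← sq, integral_sin_sq]

theorem integral_cos_mul_cos_zero_two_pi : ∫ x in (0 : ℝ)..2 * π, cos x * cos x = π := by
  simp [← sq, integral_cos_sq]

theorem integral_sin_mul_cos_zero_two_pi : ∫ x in (0 : ℝ)..2 * π, sin x * cos x = 0 := by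
  simp [integral_sin_mul_cos₁]

section

variable {E : Type*} [NormedAddCommGroup E] [NormedSpace ℝ E] [CompleteSpace E]

theorem integral_sin_cos_quadratic_zero_two_pi (A B C : E) :
    ∫ x in (0 : ℝ)..2 * π, (sin x * sin x) • A + (sin x * cos x) • B + (cos x * cos x) • C =
      π • (A + C) := by
  have hint : ∀ (f : ℝ → ℝ) (D : E), Continuous f →
      IntervalIntegrable (fun x => f x • D) MeasureTheory.volume 0 (2 * π) :=
    fun f D hf => (hf.smul continuous_const).intervalIntegrable _ _
  rw [intervalIntegral.integral_add ((hint _ A (by fun_prop)).add (hint _ B (by fun_prop)))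
      (hint _ C (by fun_prop)),
    intervalIntegral.integral_add (hint _ A (by fun_prop)) (hint _ B (by fun_prop)),
    intervalIntegral.integral_smul_const, intervalIntegral.integral_smul_const,
    intervalIntegral.integral_smul_const, integral_sin_mul_sin_zero_two_pi,
    integral_sin_mul_cos_zero_two_pi, integral_cos_mul_cos_zero_two_pi, zero_smul, add_zero,
    smul_add]

theorem integral_sin_cos_quadratic_period {ω : ℝ} (hω : ω ≠ 0) (A B C : E) :
    ∫ t in (0 : ℝ)..2 * π / ω, (sin (ω * t) * sin (ω * t)) • A + (sin (ω * t) * cos (ω * t)) • B +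
        (cos (ω * t) * cos (ω * t)) • C =
      (π / ω) • (A + C) := by
  rw [intervalIntegral.integral_comp_mul_left
      (fun x => (sin x * sin x) • A + (sin x * cos x) • B + (cos x * cos x) • C) hω,
    mul_zero, mul_div_cancel₀ _ hω, integral_sin_cos_quadratic_zero_two_pi, smul_smul, inv_mul_eq_div]

end

theorem dipoleForce_first_order_average_general
    (μ₀ : ℝ) (r : Fin 3 → ℝ)
    (ω : ℝ) (hω : 0 < ω) (μis μic μjs μjc : Fin 3 → ℝ)
    (T : ℝ) (hT : T = 2 * Real.pi / ω) :
    (1 / T) • (∫ t in (0 : ℝ)..T,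
        dipoleForce μ₀ (Real.sin (ω * t) • μis + Real.cos (ω * t) • μic)
          (Real.sin (ω * t) • μjs + Real.cos (ω * t) • μjc) r) =
      (1 / 2 : ℝ) • (dipoleForce μ₀ μis μjs r + dipoleForce μ₀ μic μjc r) := by
  subst hT
  simp_rw [dipoleForce_smul_add_smul]
  rw [integral_sin_cos_quadratic_period hω.ne', smul_smul]
  congr 1
  field_simp

/-- the first-order average over one period `T = 2π/ω` of the dipole
force between two AC-driven dipoles equals half the sum of the sine–sine and
cosine–cosine forces. -/
theorem dipoleForce_first_order_average
    (μ₀ : ℝ) (hμ₀ : 0 < μ₀) (r : Fin 3 → ℝ) (hr : r ≠ 0)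
    (ω : ℝ) (hω : 0 < ω) (μis μic μjs μjc : Fin 3 → ℝ)
    (T : ℝ) (hT : T = 2 * Real.pi / ω) :
    (1 / T) • (∫ t in (0 : ℝ)..T,
        dipoleForce μ₀ (Real.sin (ω * t) • μis + Real.cos (ω * t) • μic)
          (Real.sin (ω * t) • μjs + Real.cos (ω * t) • μjc) r) =
      (1 / 2 : ℝ) • (dipoleForce μ₀ μis μjs r + dipoleForce μ₀ μic μjc r) :=
  dipoleForce_first_order_average_general μ₀ r ω hω μis μic μjs μjc T hT
end
end

section
/- Let μ₀ > 0 be a real constant, let r ∈ ℝ³ with r ≠ 0, let ω > 0, and let μ_iˢ, μ_iᶜ, μ_jˢ, μ_jᶜ ∈ ℝ³. Define the time-varying dipole moments μ_i(t) = μ_iˢ·sin(ωt) + μ_iᶜ·cos(ωt) and μ_j(t) = μ_jˢ·sin(ωt) + μ_jᶜ·cos(ωt), and the dipole torque τ(μ_i, μ_j, r) = (μ₀/(4π))· μ_j × ( 3r(μ_i·r)/‖r‖⁵ − μ_i/‖r‖³ ). Then the first-order average of the torque over one period T = 2π/ω equals (1/T)·∫₀ᵀ τ(μ_i(t), μ_j(t),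 r) dt = (1/2)·( τ(μ_iˢ, μ_jˢ, r) + τ(μ_iᶜ, μ_jᶜ, r) ). -/
noncomputable section

/-! For a fixed separation `r` the torque is bilinear in the two moments, so along the drive it
is `sin² • τ(μiˢ, μjˢ) + sin cos • (τ(μiˢ, μjᶜ) + τ(μiᶜ, μjˢ)) + cos² • τ(μiᶜ, μjᶜ)`.
Over one period `sin²` and `cos²` both average to `1/2` while `sin cos` averages to `0`. -/

open Real

lemma dipoleTorque_add_smul_add_smul (μ₀ : ℝ) (r μis μic μjs μjc : Fin 3 → ℝ) (a b : ℝ) :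
    dipoleTorque μ₀ (a • μis + b • μic) (a • μjs + b • μjc) r =
      a ^ 2 • dipoleTorque μ₀ μis μjs r +
        (a * b) • (dipoleTorque μ₀ μis μjc r + dipoleTorque μ₀ μic μjs r) +
          b ^ 2 • dipoleTorque μ₀ μic μjc r := by
  funext k
  fin_cases k <;>
    simp [dipoleTorque, cross3, dot3, Fin.sum_univ_three] <;> ring

section OnePeriod

variable {E : Type*} [NormedAddCommGroup E] [NormedSpace ℝ E] {ω : ℝ}

lemma integral_comp_mul_left_period (hω : ω ≠ 0) (f : ℝ → E) :
    ∫ t in (0 : ℝ)..2 * π / ω, f (ω * t) = ω⁻¹ • ∫ x in (0 : ℝ)..2 * π, f x := by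
  rw [intervalIntegral.integral_comp_mul_left f hω, mul_zero, mul_div_cancel₀ _ hω]

lemma integral_sin_mul_sq_period (hω : ω ≠ 0) :
    ∫ t in (0 : ℝ)..2 * π / ω, sin (ω * t) ^ 2 = π / ω := by
  rw [integral_comp_mul_left_period hω (fun x => sin x ^ 2), integral_sin_sq]
  simp only [sin_zero, sin_two_pi, zero_mul, sub_zero, smul_eq_mul]
  ring

lemma integral_cos_mul_sq_period (hω : ω ≠ 0) :
    ∫ t in (0 : ℝ)..2 * π / ω, cos (ω * t) ^ 2 = π / ω := by
  rw [integral_comp_mul_left_period hω (fun x => cos x ^ 2), integral_cos_sq]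
  simp only [sin_zero, sin_two_pi, mul_zero, sub_zero, smul_eq_mul]
  ring

lemma integral_sin_mul_mul_cos_mul_period (hω : ω ≠ 0) :
    ∫ t in (0 : ℝ)..2 * π / ω, sin (ω * t) * cos (ω * t) = 0 := by
  rw [integral_comp_mul_left_period hω (fun x => sin x * cos x), integral_sin_mul_cos₁]
  simp

lemma integral_trigQuadratic_period [CompleteSpace E] (hω : ω ≠ 0) (A B C : E) :
    ∫ t in (0 : ℝ)..2 * π / ω,
        (sin (ω * t) ^ 2 • A + (sin (ω * t) * cos (ω * t)) • B + cos (ω * t) ^ 2 • C) =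
      (π / ω) • (A + C) := by
  rw [intervalIntegral.integral_add, intervalIntegral.integral_add,
    intervalIntegral.integral_smul_const, intervalIntegral.integral_smul_const,
    intervalIntegral.integral_smul_const, integral_sin_mul_sq_period hω,
    integral_sin_mul_mul_cos_mul_period hω, integral_cos_mul_sq_period hω,
    zero_smul, add_zero, smul_add]
  all_goals
    apply Continuous.intervalIntegrable
    fun_prop

end OnePeriod

theorem dipoleTorque_first_order_average_general
    (μ₀ : ℝ) (r : Fin 3 → ℝ)
    (ω : ℝ) (hω : 0 < ω) (μis μic μjs μjc : Fin 3 → ℝ)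
    (T : ℝ) (hT : T = 2 * Real.pi / ω) :
    (1 / T) • (∫ t in (0 : ℝ)..T,
        dipoleTorque μ₀ (Real.sin (ω * t) • μis + Real.cos (ω * t) • μic)
          (Real.sin (ω * t) • μjs + Real.cos (ω * t) • μjc) r) =
      (1 / 2 : ℝ) • (dipoleTorque μ₀ μis μjs r + dipoleTorque μ₀ μic μjc r) := by
  subst hT
  simp only [dipoleTorque_add_smul_add_smul]
  rw [integral_trigQuadratic_period hω.ne', smul_smul]
  congr 1
  field_simp

/-- the first-order average over one period `T = 2π/ω` of the dipole
torque between two AC-driven dipoles equals half the sum of the sine–sine and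
cosine–cosine torques. -/
theorem dipoleTorque_first_order_average
    (μ₀ : ℝ) (hμ₀ : 0 < μ₀) (r : Fin 3 → ℝ) (hr : r ≠ 0)
    (ω : ℝ) (hω : 0 < ω) (μis μic μjs μjc : Fin 3 → ℝ)
    (T : ℝ) (hT : T = 2 * Real.pi / ω) :
    (1 / T) • (∫ t in (0 : ℝ)..T,
        dipoleTorque μ₀ (Real.sin (ω * t) • μis + Real.cos (ω * t) • μic)
          (Real.sin (ω * t) • μjs + Real.cos (ω * t) • μjc) r) =
      (1 / 2 : ℝ) • (dipoleTorque μ₀ μis μjs r + dipoleTorque μ₀ μic μjc r) :=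
  dipoleTorque_first_order_average_general μ₀ r ω hω μis μic μjs μjc T hT
end
end
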